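/- (Time-average lemma for Lotka–Volterra systems.) Consider the Lotka–Volterra system x_i' = x_i(ρ_i + Σ_{j=1}^n a_{ij} x_j), 1 ≤ i ≤ n, with real parameters ρ_i and matrix A = (a_{ij}). Suppose k < n, the k×k submatrix Â = (a_{ij})_{1≤i,j≤k} is invertible, and p = (p_1,…,p_k) with all p_i > 0 is the unique solution of ρ_i + Σ_{j=1}^k a_{ij} p_j = 0 (1 ≤ i ≤ k). Then there exists a constant c > 0, depending only on A and k, with the following property: for every bounded differentiable solution x : [0,∞) → ℝ^n with all components positive, and every m, M, δ > 0 such that m ≤ x_i(t) ≤ M for all 1 ≤ i ≤ k and t > 0, x_{k+1}(t) ≤ δ for all t > 0, and x_j(t) → 0 as t → ∞ for all j > k+1, one has limsup_{T→∞} |(1/T)∫_0^T x_i(t) dt − p_i| ≤ c·δ for each 1 ≤ i ≤ k. -/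

import Mathlib

/-!
Integrating `(log xᵢ)' = ρᵢ + ∑ⱼ aᵢⱼ xⱼ` over `[0, T]` and dividing by `T` expresses
`ρᵢ + ∑ⱼ aᵢⱼ x̄ⱼ(T)` through `(log xᵢ(T) - log xᵢ(0)) / T`, where `x̄ⱼ` is the time average; for
`i ≤ k` this tends to `0` because `xᵢ` stays in `[m, M]`. Subtracting the equilibrium equations
`ρᵢ + ∑_{j ≤ k} aᵢⱼ pⱼ = 0` gives `Â (x̄ - p) = o(1) - x̄_{k+1} a_{·,k+1}`, since the averages of
the species `j > k + 1` vanish in the limit (Cesàro). As `0 ≤ x̄_{k+1} ≤ δ`, inverting `Â` bounds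
the limsup by `‖Â⁻¹‖ ‖a_{·,k+1}‖ δ`.
-/

open Filter Topology Finset MeasureTheory Matrix

noncomputable def timeAverage (f : ℝ → ℝ) (T : ℝ) : ℝ :=
  (1 / T) * ∫ t in (0:ℝ)..T, f t

lemma timeAverage_nonneg {f : ℝ → ℝ} {T : ℝ} (hT : 0 ≤ T) (hf : ∀ t ∈ Set.Icc 0 T, 0 ≤ f t) :
    0 ≤ timeAverage f T :=
  mul_nonneg (by positivity) (intervalIntegral.integral_nonneg hT hf)

lemma timeAverage_le {f : ℝ → ℝ} {T δ : ℝ} (hT : 0 < T) (hf : IntervalIntegrable f volume 0 T)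
    (hδ : ∀ t ∈ Set.Ioo 0 T, f t ≤ δ) : timeAverage f T ≤ δ := by
  have h := intervalIntegral.integral_mono_on_of_le_Ioo hT.le hf intervalIntegrable_const hδ
  rw [intervalIntegral.integral_const, smul_eq_mul, sub_zero] at h
  rw [timeAverage, one_div_mul_eq_div, div_le_iff₀ hT]
  linarith

lemma tendsto_timeAverage_zero {f : ℝ → ℝ} (hf : ContinuousOn f (Set.Ici 0))
    (hlim : Tendsto f atTop (𝓝 0)) : Tendsto (timeAverage f) atTop (𝓝 0) := by
  rw [Metric.tendsto_nhds]
  intro ε hε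
  obtain ⟨T₀, hT₀⟩ :=
    eventually_atTop.1 (hlim.eventually (Metric.closedBall_mem_nhds 0 (half_pos hε)))
  set S := max T₀ 1
  have hS : 0 < S := lt_max_of_lt_right one_pos
  have hint : ∀ {a b : ℝ}, 0 ≤ a → 0 ≤ b → IntervalIntegrable f volume a b := fun ha hb =>
    (hf.mono fun t ht => le_trans (le_min ha hb) ht.1).intervalIntegrable
  set C := |∫ t in (0:ℝ)..S, f t|
  have hC : Tendsto (fun T => C / T) atTop (𝓝 0) := tendsto_const_nhds.div_atTop tendsto_id
  filter_upwards [eventually_ge_atTop S, hC.eventually (gt_mem_nhds (half_pos hε))]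
    with T hST hCT
  have hT : 0 < T := hS.trans_le hST
  have htail : |∫ t in S..T, f t| ≤ ε / 2 * T := by
    have hbound : ∀ t ∈ Set.uIoc S T, ‖f t‖ ≤ ε / 2 := fun t ht => by
      simpa using hT₀ t ((le_max_left _ _).trans (Set.uIoc_of_le hST ▸ ht).1.le)
    refine (intervalIntegral.norm_integral_le_of_norm_le_const hbound).trans ?_
    rw [abs_of_nonneg (sub_nonneg.2 hST)]
    nlinarith
  rw [div_lt_iff₀ hT] at hCT
  rw [Real.dist_eq, sub_zero, timeAverage, one_div_mul_eq_div, abs_div, abs_of_pos hT,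
    div_lt_iff₀ hT, ← intervalIntegral.integral_add_adjacent_intervals (hint le_rfl hS.le)
      (hint hS.le hT.le)]
  linarith [abs_add_le (∫ t in (0:ℝ)..S, f t) (∫ t in S..T, f t)]

lemma integral_eq_log_sub_log {x g : ℝ → ℝ} {T : ℝ} (hT : 0 ≤ T)
    (hx : ∀ t ∈ Set.Icc 0 T, 0 < x t) (hderiv : ∀ t ∈ Set.Icc 0 T, HasDerivAt x (x t * g t) t)
    (hg : IntervalIntegrable g volume 0 T) :
    ∫ t in (0:ℝ)..T, g t = Real.log (x T) - Real.log (x 0) := by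
  refine intervalIntegral.integral_eq_sub_of_hasDerivAt (f := fun t => Real.log (x t))
    (fun t ht => ?_) hg
  rw [Set.uIcc_of_le hT] at ht
  simpa [mul_div_cancel_left₀ _ (hx t ht).ne'] using (hderiv t ht).log (hx t ht).ne'

lemma tendsto_log_sub_div_atTop {x : ℝ → ℝ} {m M : ℝ} (hm : 0 < m)
    (hx : ∀ t : ℝ, 0 < t → m ≤ x t ∧ x t ≤ M) (c : ℝ) :
    Tendsto (fun T => (Real.log (x T) - c) / T) atTop (𝓝 0) := by
  have hbdd : IsBoundedUnder (· ≤ ·) atTop (fun T => ‖Real.log (x T) - c‖) := by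
    refine isBoundedUnder_of_eventually_le (a := max |Real.log m| |Real.log M| + |c|) ?_
    filter_upwards [eventually_gt_atTop 0] with T hT
    obtain ⟨hmx, hxM⟩ := hx T hT
    have hlog := abs_le_max_abs_abs (Real.log_le_log hm hmx)
      (Real.log_le_log (hm.trans_le hmx) hxM)
    exact (norm_sub_le _ _).trans (by simpa using hlog)
  simpa [div_eq_inv_mul] using tendsto_inv_atTop_zero.zero_mul_isBoundedUnder_le hbdd

lemma exists_limsup_abs_apply_le_of_mulVec_eq {ι : Type*} [Fintype ι] [DecidableEq ι]
    {B : Matrix ι ι ℝ} (hB : IsUnit B.det) :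
    ∃ C, 0 ≤ C ∧ ∀ {u e b : ℝ → ι → ℝ} {β : ℝ}, (∀ᶠ T in atTop, B *ᵥ u T = e T + b T) →
      Tendsto e atTop (𝓝 0) → (∀ᶠ T in atTop, ‖b T‖ ≤ β) →
      ∀ i, limsup (fun T => |u T i|) atTop ≤ C * β := by
  -- the `ℓ∞` operator norm is the one compatible with the sup norm on `ι → ℝ`
  let _ : NormedAddCommGroup (Matrix ι ι ℝ) := Matrix.linftyOpNormedAddCommGroup
  refine ⟨‖B⁻¹‖, norm_nonneg _, fun {u e b β} hu he hb i => ?_⟩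
  have hinv : Tendsto (fun T => ‖B⁻¹ *ᵥ e T‖ + ‖B⁻¹‖ * β) atTop (𝓝 (‖B⁻¹‖ * β)) := by
    have hcont : Continuous fun v : ι → ℝ => B⁻¹ *ᵥ v :=
      continuous_const.matrix_mulVec continuous_id
    simpa using ((hcont.tendsto 0).comp he).norm.add_const (‖B⁻¹‖ * β)
  refine (limsup_le_limsup ?_ (isCoboundedUnder_le_of_le atTop fun T => abs_nonneg _)
    hinv.isBoundedUnder_le).trans hinv.limsup_eq.le
  filter_upwards [hu, hb] with T huT hbT
  have hsolve : u T = B⁻¹ *ᵥ e T + B⁻¹ *ᵥ b T := by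
    rw [← Matrix.mulVec_add, ← huT, Matrix.mulVec_mulVec, Matrix.nonsing_inv_mul B hB,
      Matrix.one_mulVec]
  calc |u T i| ≤ ‖u T‖ := norm_le_pi_norm (u T) i
    _ ≤ ‖B⁻¹ *ᵥ e T‖ + ‖B⁻¹ *ᵥ b T‖ := hsolve ▸ norm_add_le _ _
    _ ≤ ‖B⁻¹ *ᵥ e T‖ + ‖B⁻¹‖ * β := by
      gcongr
      exact (Matrix.linfty_opNorm_mulVec _ _).trans (by gcongr)

lemma sum_Icc_one_eq_sum_fin (k : ℕ) (g : ℕ → ℝ) :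
    ∑ j ∈ Icc 1 k, g j = ∑ j : Fin k, g (j + 1) := by
  rw [Fin.sum_univ_eq_sum_range (fun j => g (j + 1)), range_eq_Ico, sum_Ico_add' g 0 k 1,
    zero_add, Ico_add_one_right_eq_Icc]

lemma sum_Icc_one_split {k n : ℕ} (hk : k < n) (g : ℕ → ℝ) :
    ∑ j ∈ Icc 1 n, g j = ∑ j ∈ Icc 1 k, g j + g (k + 1) + ∑ j ∈ Icc (k + 2) n, g j := by
  simp only [← Ico_add_one_right_eq_Icc]
  rw [← sum_Ico_consecutive g (by omega : 1 ≤ k + 1) (by omega : k + 1 ≤ n + 1),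
    sum_eq_sum_Ico_succ_bot (by omega : k + 1 < n + 1), ← add_assoc]

def IsLVSolution (n : ℕ) (ρ : ℕ → ℝ) (a : ℕ → ℕ → ℝ) (x : ℕ → ℝ → ℝ) : Prop :=
  ∀ i ∈ Icc 1 n, ∀ t : ℝ, 0 ≤ t →
    HasDerivAt (x i) (x i t * (ρ i + ∑ j ∈ Icc 1 n, a i j * x j t)) t

namespace IsLVSolution

variable {n : ℕ} {ρ : ℕ → ℝ} {a : ℕ → ℕ → ℝ} {x : ℕ → ℝ → ℝ} {i : ℕ} {T : ℝ}

lemma continuousOn (hx : IsLVSolution n ρ a x) (hi : i ∈ Icc 1 n) :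
    ContinuousOn (x i) (Set.Ici 0) :=
  fun t ht => (hx i hi t ht).continuousAt.continuousWithinAt

lemma intervalIntegrable (hx : IsLVSolution n ρ a x) (hi : i ∈ Icc 1 n) (hT : 0 ≤ T) :
    IntervalIntegrable (x i) volume 0 T :=
  ((hx.continuousOn hi).mono (Set.uIcc_of_le hT ▸ Set.Icc_subset_Ici_self)).intervalIntegrable

lemma log_sub_log_div_eq (hx : IsLVSolution n ρ a x) (hi : i ∈ Icc 1 n)
    (hpos : ∀ t : ℝ, 0 ≤ t → 0 < x i t) (hT : 0 < T) :
    (Real.log (x i T) - Real.log (x i 0)) / T =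
      ρ i + ∑ j ∈ Icc 1 n, a i j * timeAverage (x j) T := by
  have hint : ∀ j ∈ Icc 1 n, IntervalIntegrable (fun t => a i j * x j t) volume 0 T :=
    fun j hj => (hx.intervalIntegrable hj hT.le).const_mul _
  have hsum : IntervalIntegrable (fun t => ∑ j ∈ Icc 1 n, a i j * x j t) volume 0 T := by
    simpa only [← Finset.sum_fn] using IntervalIntegrable.sum _ hint
  rw [← integral_eq_log_sub_log hT.le (fun t ht => hpos t ht.1) (fun t ht => hx i hi t ht.1)
    (intervalIntegrable_const.add hsum),
    intervalIntegral.integral_add intervalIntegrable_const hsum,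
    intervalIntegral.integral_finsetSum hint]
  simp only [intervalIntegral.integral_const_mul, intervalIntegral.integral_const, timeAverage]
  rw [sub_zero, smul_eq_mul, add_div, mul_div_cancel_left₀ _ hT.ne', sum_div]
  congr 1
  exact sum_congr rfl fun j _ => by field_simp

lemma mulVec_timeAverage_sub {k : ℕ} {p : ℕ → ℝ} (hx : IsLVSolution n ρ a x) (hkn : k < n)
    (hpos : ∀ i ∈ Icc 1 k, ∀ t : ℝ, 0 ≤ t → 0 < x i t)
    (hp : ∀ i ∈ Icc 1 k, ρ i + ∑ j ∈ Icc 1 k, a i j * p j = 0) (hT : 0 < T) :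
    (Matrix.of fun i j : Fin k => a (i.1 + 1) (j.1 + 1)) *ᵥ
        (fun j => timeAverage (x (j.1 + 1)) T - p (j.1 + 1)) =
      (fun i : Fin k => (Real.log (x (i.1 + 1) T) - Real.log (x (i.1 + 1) 0)) / T -
          ∑ j ∈ Icc (k + 2) n, a (i.1 + 1) j * timeAverage (x j) T) +
        (-timeAverage (x (k + 1)) T) • fun i : Fin k => a (i.1 + 1) (k + 1) := by
  ext i
  have hik : i.1 + 1 ∈ Icc 1 k := mem_Icc.2 ⟨by omega, i.2⟩
  have hgrowth := hx.log_sub_log_div_eq (Icc_subset_Icc_right hkn.le hik) (hpos _ hik) hT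
  have hpi := hp _ hik
  rw [sum_Icc_one_split hkn, sum_Icc_one_eq_sum_fin] at hgrowth
  rw [sum_Icc_one_eq_sum_fin] at hpi
  simp only [mulVec, dotProduct, of_apply, mul_sub, sum_sub_distrib, Pi.add_apply, Pi.smul_apply,
    smul_eq_mul]
  linear_combination -hpi - hgrowth

lemma tendsto_log_div_sub_sum_timeAverage {k : ℕ} {m M : ℝ} (hx : IsLVSolution n ρ a x) (hm : 0 < m)
    (hmM : ∀ i ∈ Icc 1 k, ∀ t : ℝ, 0 < t → m ≤ x i t ∧ x i t ≤ M)
    (htail : ∀ j, k + 1 < j → j ≤ n → Tendsto (x j) atTop (𝓝 0)) :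
    Tendsto (fun T (i : Fin k) => (Real.log (x (i.1 + 1) T) - Real.log (x (i.1 + 1) 0)) / T -
      ∑ j ∈ Icc (k + 2) n, a (i.1 + 1) j * timeAverage (x j) T) atTop (𝓝 0) := by
  refine tendsto_pi_nhds.2 fun i => ?_
  have hlog := tendsto_log_sub_div_atTop hm (hmM _ (mem_Icc.2 ⟨by omega, i.2⟩))
    (Real.log (x (i.1 + 1) 0))
  have hsum : Tendsto (fun T => ∑ j ∈ Icc (k + 2) n, a (i.1 + 1) j * timeAverage (x j) T)
      atTop (𝓝 0) := by
    simpa using tendsto_finsetSum (Icc (k + 2) n) fun j hj =>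
      (tendsto_timeAverage_zero (hx.continuousOn (Icc_subset_Icc_left (by omega) hj))
        (htail j (by grind) (mem_Icc.1 hj).2)).const_mul (a (i.1 + 1) j)
  simpa using hlog.sub hsum

end IsLVSolution

theorem stmt17_general
    (n k : ℕ) (hkn : k < n)
    (ρ : ℕ → ℝ) (a : ℕ → ℕ → ℝ)
    (hdet : (Matrix.of fun i j : Fin k => a (i.1 + 1) (j.1 + 1)).det ≠ 0)
    (p : ℕ → ℝ)
    (hp_eq : ∀ i ∈ Finset.Icc 1 k, ρ i + ∑ j ∈ Finset.Icc 1 k, a i j * p j = 0) :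
    ∃ c : ℝ, 0 < c ∧
      ∀ x : ℕ → ℝ → ℝ,
        (∀ i ∈ Finset.Icc 1 n, ∀ t : ℝ, 0 ≤ t →
          HasDerivAt (x i) (x i t * (ρ i + ∑ j ∈ Finset.Icc 1 n, a i j * x j t)) t) →
        (∀ i ∈ Finset.Icc 1 n, ∀ t : ℝ, 0 ≤ t → 0 < x i t) →
        (∃ C : ℝ, ∀ i ∈ Finset.Icc 1 n, ∀ t : ℝ, 0 ≤ t → x i t ≤ C) →
        ∀ m M δ : ℝ, 0 < m → 0 < M → 0 < δ →
        (∀ i ∈ Finset.Icc 1 k, ∀ t : ℝ, 0 < t → m ≤ x i t ∧ x i t ≤ M) →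
        (∀ t : ℝ, 0 < t → x (k + 1) t ≤ δ) →
        (∀ j, k + 1 < j → j ≤ n → Tendsto (x j) atTop (nhds 0)) →
        ∀ i ∈ Finset.Icc 1 k,
          limsup (fun T => |(1 / T) * (∫ t in (0:ℝ)..T, x i t) - p i|) atTop ≤ c * δ := by
  obtain ⟨C, hC, hlimsup⟩ := exists_limsup_abs_apply_le_of_mulVec_eq (isUnit_iff_ne_zero.2 hdet)
  set col : Fin k → ℝ := fun i => a (i.1 + 1) (k + 1)
  refine ⟨C * ‖col‖ + 1, by positivity, ?_⟩
  rintro x (hx : IsLVSolution n ρ a x) hpos - m M δ hm - hδ hmM hδbd htail i hi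
  have hk1n : k + 1 ∈ Icc 1 n := mem_Icc.2 ⟨by omega, hkn⟩
  have hb : ∀ᶠ T in atTop, ‖(-timeAverage (x (k + 1)) T) • col‖ ≤ ‖col‖ * δ := by
    filter_upwards [eventually_gt_atTop 0] with T hT
    rw [norm_smul, norm_neg, Real.norm_of_nonneg (timeAverage_nonneg hT.le fun t ht =>
      (hpos _ hk1n t ht.1).le), mul_comm]
    gcongr
    exact timeAverage_le hT (hx.intervalIntegrable hk1n hT.le) fun t ht => hδbd t ht.1
  have hu := (eventually_gt_atTop 0).mono fun T hT => hx.mulVec_timeAverage_sub hkn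
    (fun j hj => hpos j (Icc_subset_Icc_right hkn.le hj)) hp_eq hT
  obtain ⟨i, rfl⟩ : ∃ i' : Fin k, i = i'.1 + 1 := ⟨⟨i - 1, by grind⟩, by grind⟩
  calc _ ≤ C * (‖col‖ * δ) := hlimsup hu (hx.tendsto_log_div_sub_sum_timeAverage hm hmM htail) hb i
    _ ≤ (C * ‖col‖ + 1) * δ := by linarith

theorem stmt17
    (n k : ℕ) (hk1 : 1 ≤ k) (hkn : k < n)
    (ρ : ℕ → ℝ) (a : ℕ → ℕ → ℝ)
    (hdet : (Matrix.of fun i j : Fin k => a (i.1 + 1) (j.1 + 1)).det ≠ 0)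
    (p : ℕ → ℝ)
    (hp_pos : ∀ i ∈ Finset.Icc 1 k, 0 < p i)
    (hp_eq : ∀ i ∈ Finset.Icc 1 k, ρ i + ∑ j ∈ Finset.Icc 1 k, a i j * p j = 0)
    (hp_uniq : ∀ q : ℕ → ℝ,
      (∀ i ∈ Finset.Icc 1 k, ρ i + ∑ j ∈ Finset.Icc 1 k, a i j * q j = 0) →
      ∀ i ∈ Finset.Icc 1 k, q i = p i) :
    ∃ c : ℝ, 0 < c ∧
      ∀ x : ℕ → ℝ → ℝ,
        (∀ i ∈ Finset.Icc 1 n, ∀ t : ℝ, 0 ≤ t →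
          HasDerivAt (x i) (x i t * (ρ i + ∑ j ∈ Finset.Icc 1 n, a i j * x j t)) t) →
        (∀ i ∈ Finset.Icc 1 n, ∀ t : ℝ, 0 ≤ t → 0 < x i t) →
        (∃ C : ℝ, ∀ i ∈ Finset.Icc 1 n, ∀ t : ℝ, 0 ≤ t → x i t ≤ C) →
        ∀ m M δ : ℝ, 0 < m → 0 < M → 0 < δ →
        (∀ i ∈ Finset.Icc 1 k, ∀ t : ℝ, 0 < t → m ≤ x i t ∧ x i t ≤ M) →
        (∀ t : ℝ, 0 < t → x (k + 1) t ≤ δ) →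
        (∀ j, k + 1 < j → j ≤ n → Tendsto (x j) atTop (nhds 0)) →
        ∀ i ∈ Finset.Icc 1 k,
          limsup (fun T => |(1 / T) * (∫ t in (0:ℝ)..T, x i t) - p i|) atTop ≤ c * δ :=
  stmt17_general n k hkn ρ a hdet p hp_eq
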